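/- arXiv:2002.00041 — 3 statements merged into one kernel-verified Lean document; each statement's English description precedes it below -/
import Mathlib

section
/- (Theorem 1 of the paper, for a fixed optimal decoder.) Let Z be a measurable space, π a probability measure on Z, β > 0, and r : Z → Z a measurable bijection with measurable inverse such that r#π = π. Let Q be a set of probability measures on Z such that for every q ∈ Q, the pushforward r#q is NOT in Q, and let Q̃ = Q ∪ { r#q : q ∈ Q }. Let f* : Z → ℝ be measurable, and assume f* is integrable with respect to every measure in Q̃ and KL(q ‖ π) < ∞ for every q ∈ Q̃. Suppose q* ∈ Q is the unique maximizer of q ↦ L(q, f*) over Q̃, i.e. L(q, f*) < L(q*, f*) for all q ∈ Q̃ with q ≠ q*. Then for every q ∈ Q, L(q, f* ∘ r) < L(q*, f*). In other words, transforming the latents of the optimal generative model by r strictly decreases the best achievable β-VAE objective over the variational family Q. -/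
open MeasureTheory
open scoped ENNReal

open scoped Classical in
/-- The Kullback–Leibler divergence of `q` from `π`: `∫ log (dq/dπ) dq` when `q ≪ π` and the
log-likelihood ratio is `q`-integrable, and `+∞` otherwise. -/
noncomputable def klDiv {Z : Type*} [MeasurableSpace Z] (q π : Measure Z) : ℝ≥0∞ :=
  if q ≪ π ∧ Integrable (llr q π) q then ENNReal.ofReal (∫ z, llr q π z ∂q) else ⊤

/-- The β-VAE objective for a fixed data point: `L(q, f) = ∫ f dq − β · KL(q ‖ π)`. -/
noncomputable def betaVAEObjective {Z : Type*} [MeasurableSpace Z]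
    (π : Measure Z) (β : ℝ) (q : Measure Z) (f : Z → ℝ) : ℝ :=
  (∫ z, f z ∂q) - β * (klDiv q π).toReal

/-- Theorem 1 of the paper (for a fixed optimal decoder `f*`): if the variational family `Q`
is such that `r#q ∉ Q` for all `q ∈ Q`, where `r` is a prior-preserving measurable bijection,
and `q*` is the unique maximizer of the β-VAE objective over the completion `Q̃`, then
transforming the latents of the optimal generative model by `r` strictly decreases the best
achievable β-VAE objective over `Q`. -/
theorem betaVAE_unique_of_variational_family {Z : Type*} [MeasurableSpace Z]
    (π : Measure Z) [IsProbabilityMeasure π] (β : ℝ) (hβ : 0 < β)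
    (r s : Z → Z) (hr : Measurable r) (hs : Measurable s)
    (hsr : Function.LeftInverse s r) (hrs : Function.RightInverse s r)
    (hπ : π.map r = π)
    (Q : Set (Measure Z)) (hQprob : ∀ q ∈ Q, IsProbabilityMeasure q)
    (hQ : ∀ q ∈ Q, q.map r ∉ Q)
    (Qtilde : Set (Measure Z)) (hQtilde : Qtilde = Q ∪ (fun q => q.map r) '' Q)
    (fstar : Z → ℝ) (hfstar : Measurable fstar)
    (hint : ∀ q ∈ Qtilde, Integrable fstar q)
    (hkl : ∀ q ∈ Qtilde, klDiv q π ≠ ⊤)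
    (qstar : Measure Z) (hqstar : qstar ∈ Q)
    (hmax : ∀ q ∈ Qtilde, q ≠ qstar →
      betaVAEObjective π β q fstar < betaVAEObjective π β qstar fstar) :
    ∀ q ∈ Q, betaVAEObjective π β q (fstar ∘ r) < betaVAEObjective π β qstar fstar := by

  intro q hq
  have hprob : IsProbabilityMeasure q := hQprob q hq
  have hemb : MeasurableEmbedding r :=
    (MeasurableEquiv.mk ⟨r, s, hsr, hrs⟩ hr hs).measurableEmbedding
  have hmemQ : q.map r ∈ Qtilde := by
    rw [hQtilde]; exact Or.inr ⟨q, hq, rfl⟩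
  have hmemq : q ∈ Qtilde := by rw [hQtilde]; exact Or.inl hq
  have hne : q.map r ≠ qstar := fun h => hQ q hq (h ▸ hqstar)
  have hc1 : q ≪ π ∧ Integrable (llr q π) q := by
    by_contra hc
    exact hkl q hmemq (by simp [klDiv, hc])
  have hc2 : q.map r ≪ π ∧ Integrable (llr (q.map r) π) (q.map r) := by
    by_contra hc
    exact hkl (q.map r) hmemQ (by simp [klDiv, hc])
  have hrd := hemb.rnDeriv_map q π
  have heqπ : (fun x => llr (q.map r) π (r x)) =ᵐ[π] llr q π := by
    have hrd' : (fun x => (q.map r).rnDeriv (π.map r) (r x)) =ᵐ[π] q.rnDeriv π := hrd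
    rw [hπ] at hrd'
    filter_upwards [hrd'] with x hx
    simp [llr, hx]
  have heqq : (fun x => llr (q.map r) π (r x)) =ᵐ[q] llr q π :=
    heqπ.filter_mono hc1.1.ae_le
  have hllr_eq : ∫ z, llr (q.map r) π z ∂(q.map r) = ∫ z, llr q π z ∂q := by
    rw [integral_map hr.aemeasurable (measurable_llr _ _).aestronglyMeasurable]
    exact integral_congr_ae heqq
  have hkl_eq : klDiv (q.map r) π = klDiv q π := by
    rw [klDiv, klDiv, if_pos hc2, if_pos hc1, hllr_eq]
  have hint_eq : ∫ z, (fstar ∘ r) z ∂q = ∫ z, fstar z ∂(q.map r) :=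
    (integral_map hr.aemeasurable hfstar.aestronglyMeasurable).symm
  have hobj : betaVAEObjective π β q (fstar ∘ r) = betaVAEObjective π β (q.map r) fstar := by
    rw [betaVAEObjective, betaVAEObjective, hint_eq, hkl_eq]
  rw [hobj]
  exact hmax (q.map r) hmemQ hne
end

section
/- (Appendix A non-uniqueness construction for factorized priors.) Let μ = μ₁ ⊗ ⋯ ⊗ μ_d be a product of Borel probability measures on ℝ, each μ_i having a continuous and strictly increasing cumulative distribution function F_i : ℝ → (0,1) that is a bijection onto (0,1). Let Φ : ℝ → (0,1) denote the cumulative distribution function of the standard normal distribution, and let U be a d×d orthogonal matrix. Define r : ℝᵈ → ℝᵈ by r(z)_i = F_i⁻¹(Φ((U w)_i)) where w_j = Φ⁻¹(F_j(z_j)) for each j. Then r#μ = μ, i.e. the map r leaves the factorized prior invariant while mixing its coordinates whenever U is not a signed permutation matrix. -/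
/-!
Each coordinate map `t ↦ Φ⁻¹(F_i t)` is the quantile coupling of `μ_i` with the standard normal
law: since both CDFs are strictly increasing with values in `(0, 1)`, the preimage of `(-∞, t]` is
`(-∞, F_i⁻¹(Φ t)]`, which has `μ_i`-mass `Φ t`. So `z ↦ (Φ⁻¹(F_j z_j))_j` carries `μ` to the
standard Gaussian on `ℝᵈ`, `U` preserves that Gaussian (it is `stdGaussian` read in coordinates,
and `U` is a linear isometry of Euclidean space), and the coordinatewise inverse couplings carry it
back to `μ`.
-/

open MeasureTheory ProbabilityTheory Set Matrix

lemma measureReal_pos_of_absolutelyContinuous {α : Type*} [MeasurableSpace α]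
    {μ ν : Measure α} [IsFiniteMeasure ν] (hμν : μ ≪ ν) {s : Set α} (hs : μ s ≠ 0) :
    0 < ν.real s :=
  ENNReal.toReal_pos (mt (@hμν s) hs) (measure_ne_top ν s)

lemma strictMono_measureReal_Iic {ν : Measure ℝ} [IsFiniteMeasure ν] (hν : volume ≪ ν) :
    StrictMono fun t => ν.real (Iic t) := by
  intro s t hst
  have hsplit : ν.real (Iic t) = ν.real (Iic s) + ν.real (Ioc s t) := by
    rw [← Iic_union_Ioc_eq_Iic hst.le,
      measureReal_union (Iic_disjoint_Ioc le_rfl) measurableSet_Ioc]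
  have hIoc : 0 < ν.real (Ioc s t) :=
    measureReal_pos_of_absolutelyContinuous hν (by simp [hst])
  exact (lt_add_of_pos_right _ hIoc).trans_eq hsplit.symm

lemma measureReal_Iic_mem_Ioo {ν : Measure ℝ} [IsProbabilityMeasure ν] (hν : volume ≪ ν)
    (t : ℝ) : ν.real (Iic t) ∈ Ioo 0 1 := by
  have hIoi : 0 < ν.real (Ioi t) := measureReal_pos_of_absolutelyContinuous hν (by simp)
  rw [← compl_Iic, probReal_compl_eq_one_sub measurableSet_Iic] at hIoi
  exact ⟨measureReal_pos_of_absolutelyContinuous hν (by simp), by linarith⟩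

lemma comp_le_iff_le_comp {α β γ : Type*} [LinearOrder α] [LinearOrder β] [Preorder γ]
    {F : α → γ} {G : β → γ} {F' : γ → α} {G' : γ → β} {s : Set γ}
    (hF : StrictMono F) (hG : StrictMono G) (hFs : ∀ a, F a ∈ s) (hGs : ∀ b, G b ∈ s)
    (hFF' : RightInvOn F' F s) (hGG' : RightInvOn G' G s) (a : α) (b : β) :
    G' (F a) ≤ b ↔ a ≤ F' (G b) := by
  rw [← hG.le_iff_le, ← hF.le_iff_le, hGG' (hFs a), hFF' (hGs b)]

theorem measurePreserving_quantile_comp_cdf {μ ν : Measure ℝ} [IsProbabilityMeasure μ]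
    [IsProbabilityMeasure ν] {F G F' G' : ℝ → ℝ}
    (hFμ : ∀ t, F t = μ.real (Iic t)) (hGν : ∀ t, G t = ν.real (Iic t))
    (hF : StrictMono F) (hG : StrictMono G) (hFs : ∀ t, F t ∈ Ioo 0 1) (hGs : ∀ t, G t ∈ Ioo 0 1)
    (hFF' : RightInvOn F' F (Ioo 0 1)) (hGG' : RightInvOn G' G (Ioo 0 1)) :
    MeasurePreserving (fun t => G' (F t)) μ ν := by
  have hpre : ∀ t, (fun z => G' (F z)) ⁻¹' Iic t = Iic (F' (G t)) := fun t => by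
    ext z; exact comp_le_iff_le_comp hF hG hFs hGs hFF' hGG' z t
  have hmeas : Measurable fun t => G' (F t) :=
    measurable_of_Iic fun t => hpre t ▸ measurableSet_Iic
  refine ⟨hmeas, Measure.ext_of_Iic _ _ fun t => ?_⟩
  have : IsProbabilityMeasure (μ.map fun t => G' (F t)) :=
    Measure.isProbabilityMeasure_map hmeas.aemeasurable
  rw [Measure.map_apply hmeas measurableSet_Iic, hpre, ← measureReal_eq_measureReal_iff,
    ← hFμ, ← hGν, hFF' (hGs t)]

theorem map_mulVec_pi_gaussianReal {ι : Type*} [Fintype ι] [DecidableEq ι] {U : Matrix ι ι ℝ}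
    (hU : U ∈ orthogonalGroup ι ℝ) :
    (Measure.pi fun _ : ι => gaussianReal 0 1).map (U *ᵥ ·) =
      Measure.pi fun _ => gaussianReal 0 1 := by
  let e := Unitary.linearIsometryEquiv ⟨toEuclideanCLM (𝕜 := ℝ) U, Unitary.map_mem _ hU⟩
  have he : (U *ᵥ ·) ∘ WithLp.ofLp = WithLp.ofLp ∘ e := rfl
  have hpi : Measure.pi (fun _ : ι => gaussianReal 0 1) =
      (stdGaussian (EuclideanSpace ℝ ι)).map WithLp.ofLp := by
    rw [← map_pi_eq_stdGaussian, Measure.map_map (by fun_prop) (by fun_prop)]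
    exact Measure.map_id.symm
  rw [hpi, Measure.map_map (by fun_prop) (by fun_prop), he,
    ← Measure.map_map (by fun_prop) (by fun_prop), stdGaussian_map]

theorem factorized_prior_invariant_transform_general {d : ℕ}
    (μ : Fin d → Measure ℝ) [∀ i, IsProbabilityMeasure (μ i)]
    (F : Fin d → ℝ → ℝ) (hF : ∀ i t, F i t = (μ i (Set.Iic t)).toReal)
    (hFmono : ∀ i, StrictMono (F i))
    (hFrange : ∀ i, Set.range (F i) = Set.Ioo (0 : ℝ) 1)
    (G : Fin d → ℝ → ℝ)
    (hFG : ∀ i, ∀ y ∈ Set.Ioo (0 : ℝ) 1, F i (G i y) = y)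
    (Φ : ℝ → ℝ) (hΦ : ∀ t, Φ t = (gaussianReal 0 1 (Set.Iic t)).toReal)
    (Φinv : ℝ → ℝ)
    (hΦΦinv : ∀ y ∈ Set.Ioo (0 : ℝ) 1, Φ (Φinv y) = y)
    (U : Matrix (Fin d) (Fin d) ℝ) (hU : U ∈ Matrix.orthogonalGroup (Fin d) ℝ)
    (r : (Fin d → ℝ) → (Fin d → ℝ))
    (hr : ∀ z i, r z i = G i (Φ (U.mulVec (fun j => Φinv (F j (z j))) i))) :
    (Measure.pi μ).map r = Measure.pi μ := by
  have hvol : volume ≪ gaussianReal 0 1 := gaussianReal_absolutelyContinuous' 0 one_ne_zero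
  have hΦmono : StrictMono Φ := (funext hΦ : Φ = _) ▸ strictMono_measureReal_Iic hvol
  have hΦmem t : Φ t ∈ Ioo 0 1 := hΦ t ▸ measureReal_Iic_mem_Ioo hvol t
  have hFmem i t : F i t ∈ Ioo 0 1 := hFrange i ▸ mem_range_self t
  have hto := measurePreserving_pi μ (fun _ => gaussianReal 0 1) fun i =>
    measurePreserving_quantile_comp_cdf (hF i) hΦ (hFmono i) hΦmono (hFmem i) hΦmem (hFG i) hΦΦinv
  have hback := measurePreserving_pi (fun _ => gaussianReal 0 1) μ fun i =>
    measurePreserving_quantile_comp_cdf hΦ (hF i) hΦmono (hFmono i) hΦmem (hFmem i) hΦΦinv (hFG i)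
  have hrot : MeasurePreserving (U *ᵥ ·) _ _ :=
    ⟨(Continuous.matrix_mulVec continuous_const continuous_id).measurable,
      map_mulVec_pi_gaussianReal hU⟩
  have hr' : r = (fun w i => G i (Φ (w i))) ∘ (U *ᵥ ·) ∘ fun z j => Φinv (F j (z j)) :=
    funext fun z => funext (hr z)
  exact hr' ▸ ((hback.comp hrot).comp hto).map_eq

/-- Appendix A non-uniqueness construction for factorized priors: composing the coordinatewise
probability integral transforms (to uniform, then to standard normal), an orthogonal map `U`,
and the inverse transforms, leaves a factorized prior `μ = μ₁ ⊗ ⋯ ⊗ μ_d` invariant. -/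
theorem factorized_prior_invariant_transform {d : ℕ}
    (μ : Fin d → Measure ℝ) [∀ i, IsProbabilityMeasure (μ i)]
    (F : Fin d → ℝ → ℝ) (hF : ∀ i t, F i t = (μ i (Set.Iic t)).toReal)
    (hFcont : ∀ i, Continuous (F i)) (hFmono : ∀ i, StrictMono (F i))
    (hFrange : ∀ i, Set.range (F i) = Set.Ioo (0 : ℝ) 1)
    (G : Fin d → ℝ → ℝ)
    (hGF : ∀ i t, G i (F i t) = t)
    (hFG : ∀ i, ∀ y ∈ Set.Ioo (0 : ℝ) 1, F i (G i y) = y)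
    (Φ : ℝ → ℝ) (hΦ : ∀ t, Φ t = (gaussianReal 0 1 (Set.Iic t)).toReal)
    (Φinv : ℝ → ℝ)
    (hΦinvΦ : ∀ t, Φinv (Φ t) = t)
    (hΦΦinv : ∀ y ∈ Set.Ioo (0 : ℝ) 1, Φ (Φinv y) = y)
    (U : Matrix (Fin d) (Fin d) ℝ) (hU : U ∈ Matrix.orthogonalGroup (Fin d) ℝ)
    (r : (Fin d → ℝ) → (Fin d → ℝ))
    (hr : ∀ z i, r z i = G i (Φ (U.mulVec (fun j => Φinv (F j (z j))) i))) :
    (Measure.pi μ).map r = Measure.pi μ :=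
  factorized_prior_invariant_transform_general μ F hF hFmono hFrange G hFG Φ hΦ Φinv hΦΦinv U hU r
    hr
end

section
/- (Optimal variational covariance, Eqs. (8)–(10).) Let H be a real symmetric d×d matrix and β > 0 such that β·I − H is positive definite. Define, on the set of real symmetric positive-definite d×d matrices, F(Σ) = ½·tr(HΣ) − (β/2)·(tr(Σ) − log det(Σ) − d). Then Σ* := (I − (1/β)H)⁻¹ is positive definite, F(Σ) ≤ F(Σ*) for every positive-definite Σ with equality if and only if Σ = Σ*, and the optimal value is F(Σ*) = −(β/2)·log det(I − (1/β)H). -/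
/-!
With `A = 1 - β⁻¹ • H`, which is positive definite, `F Σ = -(β/2) (tr (A Σ) - log det Σ - d)`.
For `M = √A Σ √A` one has `tr (A Σ) - log det Σ = tr M - log det M + log det A`, and
`tr M - log det M - d = ∑ (λ - log λ - 1) ≥ 0` over the eigenvalues `λ` of `M`, with equality iff
every `λ = 1`, i.e. `M = 1`, i.e. `Σ = A⁻¹`.
-/

open Matrix

namespace Matrix

variable {n : Type*} [Fintype n] [DecidableEq n]

lemma IsHermitian.eq_one_of_eigenvalues_eq_one {M : Matrix n n ℝ} (hM : M.IsHermitian)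
    (h : ∀ i, hM.eigenvalues i = 1) : M = 1 := by
  refine CFC.eq_one_of_spectrum_subset_one (R := ℝ) M ?_ hM
  rw [hM.spectrum_real_eq_range_eigenvalues]
  rintro _ ⟨i, rfl⟩
  exact h i

lemma PosDef.trace_sub_log_det_sub_card_eq_sum {M : Matrix n n ℝ} (hM : M.PosDef) :
    M.trace - Real.log M.det - Fintype.card n
      = ∑ i, (hM.1.eigenvalues i - Real.log (hM.1.eigenvalues i) - 1) := by
  rw [hM.1.trace_eq_sum_eigenvalues, hM.1.det_eq_prod_eigenvalues]
  simp only [RCLike.ofReal_real_eq_id, id]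
  rw [Real.log_prod fun i _ => (hM.eigenvalues_pos i).ne', Finset.sum_sub_distrib,
    Finset.sum_sub_distrib]
  simp

lemma PosDef.card_le_trace_sub_log_det {M : Matrix n n ℝ} (hM : M.PosDef) :
    (Fintype.card n : ℝ) ≤ M.trace - Real.log M.det := by
  have hsum := hM.trace_sub_log_det_sub_card_eq_sum
  have hnonneg : 0 ≤ ∑ i, (hM.1.eigenvalues i - Real.log (hM.1.eigenvalues i) - 1) :=
    Finset.sum_nonneg fun i _ => by
      linarith [Real.log_le_sub_one_of_pos (hM.eigenvalues_pos i)]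
  linarith

lemma PosDef.trace_sub_log_det_eq_card_iff {M : Matrix n n ℝ} (hM : M.PosDef) :
    M.trace - Real.log M.det = Fintype.card n ↔ M = 1 := by
  refine ⟨fun h => hM.1.eq_one_of_eigenvalues_eq_one fun i => ?_, by rintro rfl; simp⟩
  have hterm : ∀ i ∈ Finset.univ,
      0 ≤ hM.1.eigenvalues i - Real.log (hM.1.eigenvalues i) - 1 := fun i _ => by
    linarith [Real.log_le_sub_one_of_pos (hM.eigenvalues_pos i)]
  have hzero := (Finset.sum_eq_zero_iff_of_nonneg hterm).mp
    (by rw [← hM.trace_sub_log_det_sub_card_eq_sum, h, sub_self]) i (Finset.mem_univ i)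
  by_contra hne
  linarith [Real.log_lt_sub_one_of_pos (hM.eigenvalues_pos i) hne]

open scoped MatrixOrder in
/-- The witness is `M = √A * S * √A`. -/
lemma PosDef.exists_posDef_trace_mul_sub_log_det_eq {A S : Matrix n n ℝ} (hA : A.PosDef)
    (hS : S.PosDef) :
    ∃ M : Matrix n n ℝ, M.PosDef ∧
      (A * S).trace - Real.log S.det = M.trace - Real.log M.det + Real.log A.det ∧
      (M = 1 ↔ S = A⁻¹) := by
  set B := CFC.sqrt A
  have hBB : B * B = A := CFC.sqrt_mul_sqrt_self A hA.posSemidef.nonneg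
  have hB : B.PosDef := (hA.isStrictlyPositive.sqrt).posDef
  have hBu : IsUnit B := hB.isUnit
  refine ⟨B * S * B, ?_, ?_, ?_⟩
  · simpa [hB.1.star_eq] using hBu.posDef_star_left_conjugate_iff.mpr hS
  · have hB0 := hB.det_pos.ne'
    have hS0 := hS.det_pos.ne'
    rw [trace_mul_cycle, hBB, ← hBB]
    simp only [det_mul]
    rw [Real.log_mul (mul_ne_zero hB0 hS0) hB0, Real.log_mul hB0 hS0, Real.log_mul hB0 hB0]
    ring
  · have := hBu.invertible
    rw [← hBB, Matrix.mul_inv_rev]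
    constructor
    · intro h
      calc S = B⁻¹ * (B * S * B) * B⁻¹ := by simp [mul_assoc]
        _ = B⁻¹ * B⁻¹ := by rw [h, mul_one]
    · rintro rfl
      rw [mul_assoc, inv_mul_cancel_right_of_invertible, mul_inv_of_invertible]

lemma PosDef.log_det_add_card_le_trace_mul_sub_log_det {A S : Matrix n n ℝ} (hA : A.PosDef)
    (hS : S.PosDef) : Real.log A.det + Fintype.card n ≤ (A * S).trace - Real.log S.det := by
  obtain ⟨M, hM, hAS, -⟩ := hA.exists_posDef_trace_mul_sub_log_det_eq hS
  linarith [hM.card_le_trace_sub_log_det]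

lemma PosDef.trace_mul_sub_log_det_eq_iff {A S : Matrix n n ℝ} (hA : A.PosDef)
    (hS : S.PosDef) :
    (A * S).trace - Real.log S.det = Real.log A.det + Fintype.card n ↔ S = A⁻¹ := by
  obtain ⟨M, hM, hAS, hM1⟩ := hA.exists_posDef_trace_mul_sub_log_det_eq hS
  rw [← hM1, ← hM.trace_sub_log_det_eq_card_iff, hAS]
  constructor <;> intro h <;> linarith

end Matrix

theorem optimal_variational_covariance_general {d : ℕ}
    (H : Matrix (Fin d) (Fin d) ℝ) (β : ℝ) (hβ : 0 < β)
    (hpos : (β • (1 : Matrix (Fin d) (Fin d) ℝ) - H).PosDef)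
    (F : Matrix (Fin d) (Fin d) ℝ → ℝ)
    (hF : ∀ S, F S
      = (1 / 2) * (H * S).trace - (β / 2) * (S.trace - Real.log S.det - (d : ℝ)))
    (Sstar : Matrix (Fin d) (Fin d) ℝ)
    (hSstar : Sstar = (1 - β⁻¹ • H)⁻¹) :
    Sstar.PosDef ∧
      (∀ S : Matrix (Fin d) (Fin d) ℝ, S.IsSymm → S.PosDef → F S ≤ F Sstar) ∧
      (∀ S : Matrix (Fin d) (Fin d) ℝ, S.IsSymm → S.PosDef → (F S = F Sstar ↔ S = Sstar)) ∧
      F Sstar = -(β / 2) * Real.log (1 - β⁻¹ • H).det := by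
  set A := 1 - β⁻¹ • H with hA_def
  have hA : A.PosDef := by
    have hA_smul : A = β⁻¹ • (β • 1 - H) := by
      rw [smul_sub, smul_smul, inv_mul_cancel₀ hβ.ne', one_smul]
    exact hA_smul ▸ hpos.smul (inv_pos.mpr hβ)
  have hFA : ∀ S, F S = -(β / 2) * ((A * S).trace - Real.log S.det - d) := by
    intro S
    rw [hF, hA_def, sub_mul, one_mul, trace_sub, smul_mul, trace_smul, smul_eq_mul]
    field_simp
    ring
  have hFstar : F Sstar = -(β / 2) * Real.log A.det := by
    rw [hFA, hSstar, mul_nonsing_inv _ hA.det_pos.ne'.isUnit, trace_one, det_nonsing_inv,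
      Ring.inverse_eq_inv, Real.log_inv, Fintype.card_fin]
    ring
  refine ⟨hSstar ▸ hA.inv, fun S _ hS => ?_, fun S _ hS => ?_, hFstar⟩
  · have hbound := hA.log_det_add_card_le_trace_mul_sub_log_det hS
    rw [Fintype.card_fin] at hbound
    rw [hFA, hFstar]
    exact mul_le_mul_of_nonpos_left (by linarith) (by linarith)
  · rw [hFA, hFstar, hSstar, ← hA.trace_mul_sub_log_det_eq_iff hS, Fintype.card_fin,
      mul_right_inj' (by linarith), sub_eq_iff_eq_add]

/-- Optimal variational covariance (Eqs. (8)–(10)): for symmetric `H` with `β·I − H` positive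
definite, the function `F(Σ) = ½·tr(HΣ) − (β/2)(tr Σ − log det Σ − d)` over positive-definite
matrices is uniquely maximized at `Σ* = (I − (1/β)H)⁻¹`, with optimal value
`−(β/2)·log det(I − (1/β)H)`. -/
theorem optimal_variational_covariance {d : ℕ}
    (H : Matrix (Fin d) (Fin d) ℝ) (hH : H.IsSymm) (β : ℝ) (hβ : 0 < β)
    (hpos : (β • (1 : Matrix (Fin d) (Fin d) ℝ) - H).PosDef)
    (F : Matrix (Fin d) (Fin d) ℝ → ℝ)
    (hF : ∀ S, F S
      = (1 / 2) * (H * S).trace - (β / 2) * (S.trace - Real.log S.det - (d : ℝ)))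
    (Sstar : Matrix (Fin d) (Fin d) ℝ)
    (hSstar : Sstar = (1 - β⁻¹ • H)⁻¹) :
    Sstar.PosDef ∧
      (∀ S : Matrix (Fin d) (Fin d) ℝ, S.IsSymm → S.PosDef → F S ≤ F Sstar) ∧
      (∀ S : Matrix (Fin d) (Fin d) ℝ, S.IsSymm → S.PosDef → (F S = F Sstar ↔ S = Sstar)) ∧
      F Sstar = -(β / 2) * Real.log (1 - β⁻¹ • H).det :=
  optimal_variational_covariance_general H β hβ hpos F hF Sstar hSstar
end
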